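/- arXiv:2107.10668 — 5 statements merged into one kernel-verified Lean document; each statement's English description precedes it below -/
import Mathlib

section
/- Let 𝔨 be the 3-dimensional Heisenberg Lie algebra with basis X₁,X₂,X₃ and only nonzero bracket [X₁,X₂] = −X₃. Define the linear map α: 𝔨 → 𝔰𝔩(4,ℝ) by α(x₁X₁+x₂X₂+x₃X₃) = the 4×4 matrix with rows (0,x₁,0,0), (x₁,0,0,0), (x₂,−x₂,−x₁,0), (x₃,x₃,−x₁,x₁). Then for all x = x₁X₁+x₂X₂+x₃X₃ and y = y₁X₁+y₂X₂+y₃X₃, the curvature [α(x),α(y)] − α([x,y]) equals 2(x₁y₂ − x₂y₁)·E₄₂, where E₄₂ is the elementary matrix with 1 in position (4,2) and 0 elsewhere. -/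
open Matrix

noncomputable section

/-- The 3-dimensional Heisenberg bracket with [X₁,X₂] = −X₃ (in coordinates w.r.t. the basis
X₁, X₂, X₃). -/
def heisBr (x y : Fin 3 → ℝ) : Fin 3 → ℝ := ![0, 0, -(x 0 * y 1 - x 1 * y 0)]

/-- The extension α : 𝔨 → 𝔰𝔩(4,ℝ). -/
def αH (x : Fin 3 → ℝ) : Matrix (Fin 4) (Fin 4) ℝ :=
  !![0, x 0, 0, 0;
     x 0, 0, 0, 0;
     x 1, -(x 1), -(x 0), 0;
     x 2, x 2, -(x 0), x 0]

theorem trace_αH (x : Fin 3 → ℝ) : (αH x).trace = 0 := by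
  simp [αH, trace, Fin.sum_univ_four]

theorem lie_αH_sub_αH_heisBr (x y : Fin 3 → ℝ) :
    ⁅αH x, αH y⁆ - αH (heisBr x y) = (2 * (x 0 * y 1 - x 1 * y 0)) • single 3 1 1 := by
  rw [Ring.lie_def]
  ext i j
  fin_cases i <;> fin_cases j <;> simp [αH, heisBr, single] <;> ring

theorem stmt1 :
    (∀ x : Fin 3 → ℝ, (αH x).trace = 0) ∧
    (∀ x y : Fin 3 → ℝ,
      αH x * αH y - αH y * αH x - αH (heisBr x y)
        = (2 * (x 0 * y 1 - x 1 * y 0)) • Matrix.single (3 : Fin 4) (1 : Fin 4) (1 : ℝ)) :=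
  ⟨trace_αH, fun x y => Ring.lie_def (αH x) (αH y) ▸ lie_αH_sub_αH_heisBr x y⟩
end
end

section
/- For all real numbers a, b, the matrix exponential of the 3×3 matrix [[0,a,b],[a,0,−b],[0,0,−a]] equals [[cosh a, sinh a, b·e⁻ᵃ],[sinh a, cosh a, −b·e⁻ᵃ],[0,0,e⁻ᵃ]]. -/
/-!
The matrix splits as `a • J + N`, where `J = !![0, 1, 0; 1, 0, 0; 0, 0, -1]` is an involution and
`N` is square-zero with `J * N = N * J = -N`. Splitting the exponential series into even and odd
powers gives `exp (a • J) = cosh a • 1 + sinh a • J`, while `exp N = 1 + N`. As the two summands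
commute, the exponential is the product of these, which collapses to
`cosh a • 1 + sinh a • J + (cosh a - sinh a) • N` with `cosh a - sinh a = exp (-a)`.
-/

namespace NormedSpace

variable {𝔸 : Type*} [Ring 𝔸] [TopologicalSpace 𝔸] [IsTopologicalRing 𝔸]

theorem exp_eq_one_add_of_sq_eq_zero [Algebra ℚ 𝔸] {x : 𝔸} (hx : x ^ 2 = 0) :
    exp x = 1 + x := by
  rw [congrFun exp_eq_tsum_rat x, tsum_eq_sum (s := Finset.range 2) fun n hn => by
    rw [pow_eq_zero_of_le (not_lt.mp (Finset.mem_range.not.mp hn)) hx, smul_zero]]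
  simp [Finset.sum_range_succ]

theorem exp_smul_of_mul_self_eq_one [Algebra ℝ 𝔸] [ContinuousSMul ℝ 𝔸] [T2Space 𝔸]
    {J : 𝔸} (hJ : J * J = 1) (t : ℝ) :
    exp (t • J) = Real.cosh t • (1 : 𝔸) + Real.sinh t • J := by
  have hJ_even : ∀ k, J ^ (2 * k) = 1 := fun k => by rw [pow_mul, sq, hJ, one_pow]
  have hJ_odd : ∀ k, J ^ (2 * k + 1) = J := fun k => by rw [pow_succ, hJ_even, one_mul]
  rw [exp_eq_tsum ℝ]
  refine HasSum.tsum_eq (HasSum.even_add_odd ?_ ?_)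
  · convert (Real.hasSum_cosh t).smul_const (1 : 𝔸) using 2 with k
    rw [smul_pow, hJ_even, smul_smul, div_eq_inv_mul]
  · convert (Real.hasSum_sinh t).smul_const J using 2 with k
    rw [smul_pow, hJ_odd, smul_smul, div_eq_inv_mul]

end NormedSpace

theorem stmt3 (a b : ℝ) :
    NormedSpace.exp !![0, a, b; a, 0, -b; 0, 0, -a]
      = !![Real.cosh a, Real.sinh a, b * Real.exp (-a);
           Real.sinh a, Real.cosh a, -(b * Real.exp (-a));
           0, 0, Real.exp (-a)] := by
  set J : Matrix (Fin 3) (Fin 3) ℝ := !![0, 1, 0; 1, 0, 0; 0, 0, -1]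
  set N : Matrix (Fin 3) (Fin 3) ℝ := !![0, 0, b; 0, 0, -b; 0, 0, 0]
  have hsplit : !![0, a, b; a, 0, -b; 0, 0, -a] = a • J + N := by
    ext i j; fin_cases i <;> fin_cases j <;> simp [J, N]
  have hJ : J * J = 1 := by
    ext i j; fin_cases i <;> fin_cases j <;> simp [J]
  have hN : N ^ 2 = 0 := by
    ext i j; fin_cases i <;> fin_cases j <;> simp [N, sq]
  have hJN : J * N = -N := by
    ext i j; fin_cases i <;> fin_cases j <;> simp [J, N]
  have hNJ : N * J = -N := by
    ext i j; fin_cases i <;> fin_cases j <;> simp [J, N]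
  have hcomm : Commute (a • J) N := Commute.smul_left (hJN.trans hNJ.symm) a
  have hprod : (Real.cosh a • 1 + Real.sinh a • J) * (1 + N)
      = Real.cosh a • 1 + Real.sinh a • J + Real.exp (-a) • N := by
    rw [← Real.cosh_sub_sinh]
    simp only [add_mul, mul_add, smul_mul_assoc, one_mul, mul_one, hJN]
    module
  rw [hsplit, Matrix.exp_add_of_commute _ _ hcomm, NormedSpace.exp_smul_of_mul_self_eq_one hJ,
    NormedSpace.exp_eq_one_add_of_sq_eq_zero hN, hprod]
  ext i j; fin_cases i <;> fin_cases j <;> simp [J, N, mul_comm, ← sub_eq_add_neg]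
end

section
/- With 𝔤 = 𝔰𝔩(2,ℝ) × 𝔰𝔬(3) and e₁ = (2/3)X+(2/3)Y+(4/3)B, e₂ = (2/3)H+(4/3)A, e₃ = (−1/√2)X+(1/√2)Y+(2/√2)C, e₆ = (1/2)(X−Y)+C as above, the following bracket relations hold: [e₁,e₂] = −(8√2/9)e₃, [e₁,e₆] = e₂, [e₂,e₆] = −e₁, [e₄,e₆] = −e₅, [e₅,e₆] = e₄, where e₄ = H−2A and e₅ = X+Y−2B. -/
/-! In the basis `u = X + Y`, `v = (X - Y)/2`, `H` of `𝔰𝔩(2,ℝ)` one has `[u,v] = H`,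
`[H,v] = -u` and `[u,H] = 4v`. Each `eᵢ` is an `𝔰𝔩(2,ℝ)`-part plus an `𝔰𝔬(3)`-part, and since the
two factors commute, every bracket splits into the two componentwise brackets. -/

theorem lie_smul_add_smul_of_lie_eq_zero {R L : Type*} [CommRing R] [LieRing L] [LieAlgebra R L]
    {s k s' k' : L} (hsk' : ⁅s, k'⁆ = 0) (hs'k : ⁅s', k⁆ = 0) (a b c d : R) :
    ⁅a • s + b • k, c • s' + d • k'⁆ = (a * c) • ⁅s, s'⁆ + (b * d) • ⁅k, k'⁆ := by
  have hks' : ⁅k, s'⁆ = 0 := by rw [← lie_skew, hs'k, neg_zero]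
  simp only [add_lie, lie_add, smul_lie, lie_smul, hsk', hks', smul_smul, smul_zero, add_zero,
    zero_add, mul_comm c a, mul_comm d b]

section sl2

variable {L : Type*} [LieRing L] [LieAlgebra ℝ L] {H X Y : L}

theorem sl2_lie_add_half_smul_sub (hXY : ⁅X, Y⁆ = -H) : ⁅X + Y, (1/2 : ℝ) • (X - Y)⁆ = H := by
  have hYX : ⁅Y, X⁆ = H := by rw [← lie_skew, hXY, neg_neg]
  rw [lie_smul, add_lie, lie_sub, lie_sub, lie_self, lie_self, hXY, hYX]
  module

theorem sl2_lie_half_smul_sub (hHX : ⁅H, X⁆ = (-2 : ℝ) • X) (hHY : ⁅H, Y⁆ = (2 : ℝ) • Y) :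
    ⁅H, (1/2 : ℝ) • (X - Y)⁆ = -(X + Y) := by
  rw [lie_smul, lie_sub, hHX, hHY]
  module

theorem sl2_lie_add_H (hHX : ⁅H, X⁆ = (-2 : ℝ) • X) (hHY : ⁅H, Y⁆ = (2 : ℝ) • Y) :
    ⁅X + Y, H⁆ = (4 : ℝ) • ((1/2 : ℝ) • (X - Y)) := by
  rw [← lie_skew, lie_add, hHX, hHY]
  module

end sl2

theorem stmt8_general (L : Type*) [LieRing L] [LieAlgebra ℝ L]
    (H X Y A B C : L)
    (hHX : ⁅H, X⁆ = (-2 : ℝ) • X) (hHY : ⁅H, Y⁆ = (2 : ℝ) • Y) (hXY : ⁅X, Y⁆ = -H)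
    (hAB : ⁅A, B⁆ = C) (hBC : ⁅B, C⁆ = A) (hCA : ⁅C, A⁆ = B)
    (hHB : ⁅H, B⁆ = 0) (hHC : ⁅H, C⁆ = 0)
    (hXA : ⁅X, A⁆ = 0) (hXB : ⁅X, B⁆ = 0) (hXC : ⁅X, C⁆ = 0)
    (hYA : ⁅Y, A⁆ = 0) (hYB : ⁅Y, B⁆ = 0) (hYC : ⁅Y, C⁆ = 0) :
    let e1 := (2/3 : ℝ) • X + (2/3 : ℝ) • Y + (4/3 : ℝ) • B
    let e2 := (2/3 : ℝ) • H + (4/3 : ℝ) • A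
    let e3 := (-(1 / Real.sqrt 2)) • X + (1 / Real.sqrt 2) • Y + (2 / Real.sqrt 2) • C
    let e4 := H - (2 : ℝ) • A
    let e5 := X + Y - (2 : ℝ) • B
    let e6 := (1/2 : ℝ) • (X - Y) + C
    ⁅e1, e2⁆ = (-(8 * Real.sqrt 2 / 9)) • e3 ∧
    ⁅e1, e6⁆ = e2 ∧
    ⁅e2, e6⁆ = -e1 ∧
    ⁅e4, e6⁆ = -e5 ∧
    ⁅e5, e6⁆ = e4 := by
  intro e1 e2 e3 e4 e5 e6
  have he1 : e1 = (2/3 : ℝ) • (X + Y) + (4/3 : ℝ) • B := by module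
  have he4 : e4 = (1 : ℝ) • H + (-2 : ℝ) • A := by module
  have he5 : e5 = (1 : ℝ) • (X + Y) + (-2 : ℝ) • B := by module
  have he6 : e6 = (1 : ℝ) • ((1/2 : ℝ) • (X - Y)) + (1 : ℝ) • C := by module
  have hsA : ⁅X + Y, A⁆ = 0 := by rw [add_lie, hXA, hYA, add_zero]
  have hsC : ⁅X + Y, C⁆ = 0 := by rw [add_lie, hXC, hYC, add_zero]
  have hvA : ⁅(1/2 : ℝ) • (X - Y), A⁆ = 0 := by
    rw [smul_lie, sub_lie, hXA, hYA, sub_zero, smul_zero]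
  have hvB : ⁅(1/2 : ℝ) • (X - Y), B⁆ = 0 := by
    rw [smul_lie, sub_lie, hXB, hYB, sub_zero, smul_zero]
  have hBA : ⁅B, A⁆ = -C := by rw [← lie_skew, hAB]
  have hAC : ⁅A, C⁆ = -B := by rw [← lie_skew, hCA]
  refine ⟨?_, ?_, ?_, ?_, ?_⟩
  · rw [he1, lie_smul_add_smul_of_lie_eq_zero hsA hHB, sl2_lie_add_H hHX hHY, hBA]
    simp only [e3]
    match_scalars <;> field_simp <;> norm_num
  · rw [he1, he6, lie_smul_add_smul_of_lie_eq_zero hsC hvB, sl2_lie_add_half_smul_sub hXY, hBC]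
    module
  · rw [he6, lie_smul_add_smul_of_lie_eq_zero hHC hvA, sl2_lie_half_smul_sub hHX hHY, hAC, he1]
    module
  · rw [he4, he6, lie_smul_add_smul_of_lie_eq_zero hHC hvA, sl2_lie_half_smul_sub hHX hHY, hAC]
    module
  · rw [he5, he6, lie_smul_add_smul_of_lie_eq_zero hsC hvB, sl2_lie_add_half_smul_sub hXY, hBC]
    module

theorem stmt8 (L : Type*) [LieRing L] [LieAlgebra ℝ L]
    (H X Y A B C : L)
    (hHX : ⁅H, X⁆ = (-2 : ℝ) • X) (hHY : ⁅H, Y⁆ = (2 : ℝ) • Y) (hXY : ⁅X, Y⁆ = -H)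
    (hAB : ⁅A, B⁆ = C) (hBC : ⁅B, C⁆ = A) (hCA : ⁅C, A⁆ = B)
    (hHA : ⁅H, A⁆ = 0) (hHB : ⁅H, B⁆ = 0) (hHC : ⁅H, C⁆ = 0)
    (hXA : ⁅X, A⁆ = 0) (hXB : ⁅X, B⁆ = 0) (hXC : ⁅X, C⁆ = 0)
    (hYA : ⁅Y, A⁆ = 0) (hYB : ⁅Y, B⁆ = 0) (hYC : ⁅Y, C⁆ = 0) :
    let e1 := (2/3 : ℝ) • X + (2/3 : ℝ) • Y + (4/3 : ℝ) • B
    let e2 := (2/3 : ℝ) • H + (4/3 : ℝ) • A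
    let e3 := (-(1 / Real.sqrt 2)) • X + (1 / Real.sqrt 2) • Y + (2 / Real.sqrt 2) • C
    let e4 := H - (2 : ℝ) • A
    let e5 := X + Y - (2 : ℝ) • B
    let e6 := (1/2 : ℝ) • (X - Y) + C
    ⁅e1, e2⁆ = (-(8 * Real.sqrt 2 / 9)) • e3 ∧
    ⁅e1, e6⁆ = e2 ∧
    ⁅e2, e6⁆ = -e1 ∧
    ⁅e4, e6⁆ = -e5 ∧
    ⁅e5, e6⁆ = e4 :=
  stmt8_general L H X Y A B C hHX hHY hXY hAB hBC hCA hHB hHC hXA hXB hXC hYA hYB hYC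
end

section
/- Let 𝔨 be the complex Lie algebra with basis e₁,…,e₅ and nonzero brackets [e₁,e₃]=e₃, [e₁,e₄]=−e₄, [e₂,e₅]=−e₂, [e₃,e₄]=−e₁, [e₃,e₅]=−(1/2)e₃, [e₄,e₅]=(1/2)e₄. Fix s ∈ ℂ and define α_s: 𝔨 → 𝔰𝔩(4,ℂ) by sending x₁e₁+⋯+x₅e₅ to the 4×4 matrix with rows (−(3/8)x₅, 0, 0, 0), (x₁, −(1/2)x₁−(3/8)x₅, 0, x₄), (x₂, 0, (5/8)x₅, s·x₃), (x₃, −(1/2)x₃, 0, (1/8)x₅+(1/2)x₁). Then for all x,y ∈ 𝔨, the curvature [α_s(x),α_s(y)] − α_s([x,y]) equals (3/2)s(x₃y₁ − x₁y₃)·E₃₄, where E₃₄ is the elementary matrix with 1 in position (3,4). -/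
open Matrix

noncomputable section

/-- The bracket on ℂ⁵ (coordinates w.r.t. the basis e₁,…,e₅) determined by
[e₁,e₃]=e₃, [e₁,e₄]=−e₄, [e₂,e₅]=−e₂, [e₃,e₄]=−e₁, [e₃,e₅]=−(1/2)e₃, [e₄,e₅]=(1/2)e₄. -/
def br5C (x y : Fin 5 → ℂ) : Fin 5 → ℂ :=
  ![-(x 2 * y 3 - x 3 * y 2),
    -(x 1 * y 4 - x 4 * y 1),
    (x 0 * y 2 - x 2 * y 0) - (1/2) * (x 2 * y 4 - x 4 * y 2),
    -(x 0 * y 3 - x 3 * y 0) + (1/2) * (x 3 * y 4 - x 4 * y 3),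
    0]

/-- The extension α_s : 𝔨 → 𝔰𝔩(4,ℂ). -/
def αCs (s : ℂ) (x : Fin 5 → ℂ) : Matrix (Fin 4) (Fin 4) ℂ :=
  !![-(3/8) * x 4, 0, 0, 0;
     x 0, -(1/2) * x 0 - (3/8) * x 4, 0, x 3;
     x 1, 0, (5/8) * x 4, s * x 2;
     x 2, -(1/2) * x 2, 0, (1/8) * x 4 + (1/2) * x 0]

theorem trace_αCs (s : ℂ) (x : Fin 5 → ℂ) : (αCs s x).trace = 0 := by
  simp only [trace, diag_apply, Fin.sum_univ_four, αCs, of_apply, cons_val', cons_val_zero,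
    cons_val_one, cons_val, cons_val_fin_one]
  ring

theorem αCs_curvature (s : ℂ) (x y : Fin 5 → ℂ) :
    αCs s x * αCs s y - αCs s y * αCs s x - αCs s (br5C x y) =
      ((3/2) * s * (x 2 * y 0 - x 0 * y 2)) • single 2 3 1 := by
  ext i j
  simp only [Matrix.sub_apply, mul_apply, Fin.sum_univ_four, Matrix.smul_apply, single_apply,
    smul_eq_mul]
  fin_cases i <;> fin_cases j <;> simp [αCs, br5C] <;> ring

theorem stmt11 (s : ℂ) :
    (∀ x : Fin 5 → ℂ, (αCs s x).trace = 0) ∧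
    (∀ x y : Fin 5 → ℂ,
      αCs s x * αCs s y - αCs s y * αCs s x - αCs s (br5C x y)
        = ((3/2) * s * (x 2 * y 0 - x 0 * y 2)) •
            Matrix.single (2 : Fin 4) (3 : Fin 4) (1 : ℂ)) :=
  ⟨trace_αCs s, αCs_curvature s⟩
end
end

section
/- Let 𝔨 be the 6-dimensional Lie algebra with basis e₁,…,e₆ and nonzero brackets [e₁,e₄]=e₆, [e₁,e₆]=−e₂, [e₃,e₄]=−e₁, [e₃,e₅]=−e₂, [e₄,e₆]=−e₅. Define α: 𝔨 → 𝔰𝔩(4,ℝ) by α(x₁e₁+⋯+x₆e₆) = the strictly lower triangular 4×4 matrix with rows (0,0,0,0), (x₃,0,0,0), (x₁,x₄,0,0), (x₂,x₅,x₆,0). Then for all x,y ∈ 𝔨, the curvature [α(x),α(y)] − α([x,y]) equals −(x₁y₄ − x₄y₁)·E₄₃, where E₄₃ is the elementary matrix with 1 in position (4,3). -/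
open Matrix

noncomputable section

/-- The bracket on ℝ⁶ (coordinates w.r.t. the basis e₁,…,e₆) determined by
[e₁,e₄]=e₆, [e₁,e₆]=−e₂, [e₃,e₄]=−e₁, [e₃,e₅]=−e₂, [e₄,e₆]=−e₅. -/
def br6 (x y : Fin 6 → ℝ) : Fin 6 → ℝ :=
  ![-(x 2 * y 3 - x 3 * y 2),
    -(x 0 * y 5 - x 5 * y 0) - (x 2 * y 4 - x 4 * y 2),
    0,
    0,
    -(x 3 * y 5 - x 5 * y 3),
    (x 0 * y 3 - x 3 * y 0)]

/-- The extension α : 𝔨 → 𝔰𝔩(4,ℝ). -/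
def α6 (x : Fin 6 → ℝ) : Matrix (Fin 4) (Fin 4) ℝ :=
  !![0, 0, 0, 0;
     x 2, 0, 0, 0;
     x 0, x 3, 0, 0;
     x 1, x 4, x 5, 0]

/-!
`α x * α y` is supported on the entries (3,1), (4,1), (4,2), so the commutator `[α x, α y]`
reproduces the `e₁`, `e₂`, `e₅`-components of `[x, y]`, which `α` places there. What is lost is
the `e₆`-component `x₁y₄ − x₄y₁`, which `α ([x, y])` places at (4,3) while the commutator,
a product of two strictly lower triangular matrices, has no entry there.
-/

theorem br6_anticomm (x y : Fin 6 → ℝ) : br6 x y = -br6 y x := by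
  funext i
  fin_cases i <;> simp [br6] <;> ring

theorem br6_jacobi (x y z : Fin 6 → ℝ) :
    br6 (br6 x y) z + br6 (br6 y z) x + br6 (br6 z x) y = 0 := by
  funext i
  fin_cases i <;> simp [br6] <;> ring

theorem α6_mul_α6 (x y : Fin 6 → ℝ) :
    α6 x * α6 y =
      !![0, 0, 0, 0;
         0, 0, 0, 0;
         x 3 * y 2, 0, 0, 0;
         x 4 * y 2 + x 5 * y 0, x 5 * y 3, 0, 0] := by
  ext i j
  fin_cases i <;> fin_cases j <;> simp [α6, Matrix.mul_apply, Fin.sum_univ_four]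

theorem α6_curvature (x y : Fin 6 → ℝ) :
    α6 x * α6 y - α6 y * α6 x - α6 (br6 x y)
      = (-(x 0 * y 3 - x 3 * y 0)) • Matrix.single (3 : Fin 4) (2 : Fin 4) (1 : ℝ) := by
  rw [α6_mul_α6, α6_mul_α6]
  ext i j
  fin_cases i <;> fin_cases j <;> simp [α6, br6] <;> ring

theorem stmt12 :
    -- the bracket is a Lie bracket: antisymmetry and the Jacobi identity
    (∀ x y, br6 x y = -(br6 y x)) ∧
    (∀ x y z, br6 (br6 x y) z + br6 (br6 y z) x + br6 (br6 z x) y = 0) ∧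
    -- the curvature of α
    (∀ x y : Fin 6 → ℝ,
      α6 x * α6 y - α6 y * α6 x - α6 (br6 x y)
        = (-(x 0 * y 3 - x 3 * y 0)) • Matrix.single (3 : Fin 4) (2 : Fin 4) (1 : ℝ)) :=
  ⟨br6_anticomm, br6_jacobi, α6_curvature⟩
end
end
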